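/- arXiv:2211.10492 — 2 statements merged into one kernel-verified Lean document; each statement's English description precedes it below -/
import Mathlib

section
/- Let 1 → ℤ → G̃ →^p Γ → 1 be a central extension with c ∈ Z²(Γ, ℤ) the 2-cocycle induced by a section σ with σ(1)=1. Suppose that every group homomorphism G̃ → ℝ is trivial. Then c, viewed as an ℝ-valued 2-cocycle via the inclusion ℤ ⊂ ℝ, is not a 2-coboundary in Z²(Γ, ℝ). -/
/-!
Choose `r g ∈ A` with `i (r g) = σ (p g) * g⁻¹`; centrality of `i` gives
`c (p g) (p h) * r (g * h) = r g * r h`, i.e. `r` trivialises the pulled-back cocycle on `G`.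
If `φ ∘ c = δ b`, then `g ↦ φ (r g) - b (p g)` is therefore a homomorphism `G → B`, and it
shifts by `-φ a` under multiplication by the central element `i a`. When all such
homomorphisms vanish this forces `φ = 1`, which fails for the inclusion `ℤ → ℝ`.
-/

open Multiplicative

namespace CentralExtension

variable {G Γ A B : Type*} [Group G] [Group Γ] [CommGroup A] [AddCommGroup B]
  {i : A →* G} {p : G →* Γ} {σ : Γ → G} {c : Γ → Γ → A} {r : G → A}

theorem exists_apply_eq_section_mul_inv (hker : p.ker ≤ i.range)
    (hsec : ∀ γ, p (σ γ) = γ) (g : G) : ∃ a, i a = σ (p g) * g⁻¹ :=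
  hker (by simp [MonoidHom.mem_ker, hsec])

theorem cocycle_mul_eq_mul (hinj : Function.Injective i)
    (hcentral : ∀ a, i a ∈ Subgroup.center G)
    (hc : ∀ g h, i (c g h) = σ g * σ h * (σ (g * h))⁻¹)
    (hr : ∀ g, i (r g) = σ (p g) * g⁻¹) (g h : G) :
    c (p g) (p h) * r (g * h) = r g * r h := by
  have hcomm := Subgroup.mem_center_iff.mp (hcentral (r h)) g⁻¹
  rw [hr] at hcomm
  apply hinj
  rw [map_mul, map_mul, hc, hr, hr, hr, map_mul]
  calc σ (p g) * σ (p h) * (σ (p g * p h))⁻¹ * (σ (p g * p h) * (g * h)⁻¹)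
      = σ (p g) * (σ (p h) * h⁻¹ * g⁻¹) := by group
    _ = σ (p g) * g⁻¹ * (σ (p h) * h⁻¹) := by rw [← hcomm, mul_assoc]

theorem apply_mul_eq_mul_inv (hinj : Function.Injective i)
    (hcentral : ∀ a, i a ∈ Subgroup.center G) (hpi : i.range ≤ p.ker)
    (hr : ∀ g, i (r g) = σ (p g) * g⁻¹) (g : G) (a : A) :
    r (g * i a) = r g * a⁻¹ := by
  have hcomm := Subgroup.mem_center_iff.mp (inv_mem (hcentral a)) g⁻¹
  have hpa : p (i a) = 1 := hpi ⟨a, rfl⟩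
  apply hinj
  rw [hr, map_mul, hpa, mul_one, map_mul, hr, mul_inv_rev, map_inv, mul_assoc, ← hcomm]

def correctedHom (φ : A →* Multiplicative B) (b : Γ → B)
    (hb : ∀ g h, toAdd (φ (c g h)) = b g + b h - b (g * h))
    (hmul : ∀ g h, c (p g) (p h) * r (g * h) = r g * r h) : G →* Multiplicative B :=
  MonoidHom.mk' (fun g => ofAdd (toAdd (φ (r g)) - b (p g))) fun g h => by
    have hφ := congrArg (fun x => toAdd (φ x)) (hmul g h)
    simp only [map_mul, toAdd_mul, hb] at hφ
    rw [← ofAdd_add, map_mul p]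
    refine congrArg ofAdd ?_
    linear_combination (norm := abel) hφ

theorem correctedHom_apply (φ : A →* Multiplicative B) (b : Γ → B)
    (hb : ∀ g h, toAdd (φ (c g h)) = b g + b h - b (g * h))
    (hmul : ∀ g h, c (p g) (p h) * r (g * h) = r g * r h) (g : G) :
    toAdd (correctedHom φ b hb hmul g) = toAdd (φ (r g)) - b (p g) :=
  rfl

theorem map_eq_one_of_coboundary (hinj : Function.Injective i)
    (hcentral : ∀ a, i a ∈ Subgroup.center G) (hker : p.ker = i.range)
    (hsec : ∀ γ, p (σ γ) = γ) (hc : ∀ g h, i (c g h) = σ g * σ h * (σ (g * h))⁻¹)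
    (htriv : ∀ f : G →* Multiplicative B, f = 1) (φ : A →* Multiplicative B) (b : Γ → B)
    (hb : ∀ g h, toAdd (φ (c g h)) = b g + b h - b (g * h)) : φ = 1 := by
  choose r hr using exists_apply_eq_section_mul_inv hker.le hsec
  have hmul := cocycle_mul_eq_mul hinj hcentral hc hr
  have hshift := apply_mul_eq_mul_inv hinj hcentral hker.ge hr 1
  have hpi (a : A) : p (i a) = 1 := hker.ge ⟨a, rfl⟩
  have hs (g : G) : toAdd (φ (r g)) - b (p g) = 0 := by
    rw [← correctedHom_apply φ b hb hmul, htriv (correctedHom φ b hb hmul)]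
    rfl
  ext a
  have h1 := hs 1
  have hia := hs (1 * i a)
  rw [map_one] at h1
  simp only [hshift, map_mul, map_inv, toAdd_mul, toAdd_inv, map_one, hpi, mul_one] at hia
  rw [MonoidHom.one_apply, toAdd_one]
  linear_combination (norm := abel) h1 - hia

end CentralExtension

theorem cocycle_not_real_coboundary_general
    {G Γ : Type*} [Group G] [Group Γ]
    (i : Multiplicative ℤ →* G) (hinj : Function.Injective i)
    (hcentral : ∀ a : Multiplicative ℤ, i a ∈ Subgroup.center G)
    (p : G →* Γ)
    (hker : p.ker = i.range)
    (σ : Γ → G) (hsec : ∀ γ : Γ, p (σ γ) = γ)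
    (c : Γ → Γ → Multiplicative ℤ)
    (hc : ∀ g h : Γ, i (c g h) = σ g * σ h * (σ (g * h))⁻¹)
    (htriv : ∀ (f : G →* Multiplicative ℝ) (g : G), f g = 1) :
    ¬ ∃ b : Γ → ℝ, ∀ g h : Γ,
        ((Multiplicative.toAdd (c g h) : ℤ) : ℝ) = b g + b h - b (g * h) := by
  rintro ⟨b, hb⟩
  have hcast := CentralExtension.map_eq_one_of_coboundary hinj hcentral hker hsec hc
    (fun f => MonoidHom.ext (htriv f)) (Int.castAddHom ℝ).toMultiplicative b hb
  have := congrArg toAdd (DFunLike.congr_fun hcast (ofAdd 1))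
  norm_num at this

/-- If every homomorphism G̃ → ℝ is trivial, then the integral 2-cocycle of
    the central extension 1 → ℤ → G̃ → Γ → 1, viewed as an ℝ-valued cocycle,
    is not a 2-coboundary. -/
theorem cocycle_not_real_coboundary
    {G Γ : Type*} [Group G] [Group Γ]
    (i : Multiplicative ℤ →* G) (hinj : Function.Injective i)
    (hcentral : ∀ a : Multiplicative ℤ, i a ∈ Subgroup.center G)
    (p : G →* Γ) (hsurj : Function.Surjective p)
    (hker : p.ker = i.range)
    (σ : Γ → G) (hsec : ∀ γ : Γ, p (σ γ) = γ) (hσ1 : σ 1 = 1)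
    (c : Γ → Γ → Multiplicative ℤ)
    (hc : ∀ g h : Γ, i (c g h) = σ g * σ h * (σ (g * h))⁻¹)
    (htriv : ∀ (f : G →* Multiplicative ℝ) (g : G), f g = 1) :
    ¬ ∃ b : Γ → ℝ, ∀ g h : Γ,
        ((Multiplicative.toAdd (c g h) : ℤ) : ℝ) = b g + b h - b (g * h) :=
  cocycle_not_real_coboundary_general i hinj hcentral p hker σ hsec c hc htriv
end

section
/- Let Γ be a group with finite generating set S and presentation π : F_S ↠ Γ from the free group on S. Suppose Γ is weakly ucp-stable. Then for every ε > 0 there exist δ > 0 and finite subsets R₀ ⊂ ker π and W₀ ⊂ F_S \ ker π such that: for every finite-dimensional Hilbert space H and every map f : S → U(H) whose extension to F_S satisfies ‖f(r) − 1‖_{2,τ} < δ for all r ∈ R₀ and ‖f(w) − 1‖_{2,τ} > √2 − δ for all w ∈ W₀, there exists a Hilbert space Ĥ ⊇ H and a unitary representation ρ : Γ → U(Ĥ) with ‖f(s) − Pρ(s)P‖_{2,τ} < ε for all s ∈ S, where P is the orthogonal projection onto H and τ is the normalized trace on B(H). -/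
open scoped Matrix

/-- Normalized Hilbert-Schmidt norm on d×d complex matrices. -/
noncomputable def hsnorm {d : ℕ} (A : Matrix (Fin d) (Fin d) ℂ) : ℝ :=
  Real.sqrt (((Matrix.trace (Aᴴ * A)) / (d : ℂ)).re)

/-- A Hilbert space Ĥ together with an isometric embedding of ℂ^d. -/
structure HilbertExt (d : ℕ) where
  carrier : Type
  [normed : NormedAddCommGroup carrier]
  [ips : InnerProductSpace ℂ carrier]
  [complete : CompleteSpace carrier]
  V : EuclideanSpace ℂ (Fin d) →ₗᵢ[ℂ] carrier

attribute [instance] HilbertExt.normed HilbertExt.ips HilbertExt.complete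

/-- The matrix (w.r.t. the standard basis of ℂ^d) of the compression P T P of
    an operator T on Ĥ, where P is the orthogonal projection onto the image
    of ℂ^d. -/
noncomputable def compress {d : ℕ} (E : HilbertExt d)
    (T : E.carrier →L[ℂ] E.carrier) : Matrix (Fin d) (Fin d) ℂ :=
  Matrix.of fun i j =>
    (inner ℂ (E.V (EuclideanSpace.single i (1 : ℂ)))
      (T (E.V (EuclideanSpace.single j (1 : ℂ)))) : ℂ)

/-- Weak ucp-stability: every hyperlinear approximation of Γ is close to
    compressions of genuine unitary representations on larger Hilbert
    spaces. -/
def WeaklyUcpStable (Γ : Type*) [Group Γ] : Prop :=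
  ∀ (d : ℕ → ℕ) (φ : ∀ n : ℕ, Γ → Matrix.unitaryGroup (Fin (d n)) ℂ),
    (∀ g h : Γ, Filter.Tendsto
        (fun n => hsnorm ((φ n g : Matrix (Fin (d n)) (Fin (d n)) ℂ) * (φ n h : Matrix (Fin (d n)) (Fin (d n)) ℂ)
          - (φ n (g * h) : Matrix (Fin (d n)) (Fin (d n)) ℂ)))
        Filter.atTop (nhds 0)) →
    (∀ g : Γ, g ≠ 1 → Real.sqrt 2 ≤ Filter.liminf
        (fun n => hsnorm ((φ n g : Matrix (Fin (d n)) (Fin (d n)) ℂ) - 1)) Filter.atTop) →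
    ∃ (E : ∀ n : ℕ, HilbertExt (d n))
      (ρ : ∀ n : ℕ, Γ →* ((E n).carrier →L[ℂ] (E n).carrier)),
        (∀ (n : ℕ) (g : Γ), ρ n g ∈ unitary ((E n).carrier →L[ℂ] (E n).carrier))
        ∧ ∀ g : Γ, Filter.Tendsto
            (fun n => hsnorm ((φ n g : Matrix (Fin (d n)) (Fin (d n)) ℂ) - compress (E n) (ρ n g)))
            Filter.atTop (nhds 0)

section hsnormAux

attribute [local instance] Matrix.frobeniusSeminormedAddCommGroup

variable {d : ℕ}

lemma trace_conj_mul_aux (A : Matrix (Fin d) (Fin d) ℂ) :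
    Matrix.trace (Aᴴ * A) = ((∑ i, ∑ j, ‖A i j‖ ^ 2 : ℝ) : ℂ) := by
  simp only [Matrix.trace, Matrix.diag, Matrix.mul_apply, Matrix.conjTranspose_apply]
  push_cast
  rw [Finset.sum_comm]
  congr 1; ext i; congr 1; ext j
  simpa using (RCLike.conj_mul (A i j))

lemma hsnorm_eq_aux (A : Matrix (Fin d) (Fin d) ℂ) :
    hsnorm A = ‖A‖ / Real.sqrt d := by
  have h1 : ‖A‖ = Real.sqrt (∑ i, ∑ j, ‖A i j‖ ^ 2) := by
    rw [Matrix.frobenius_norm_def, Real.sqrt_eq_rpow]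
    norm_num
  have h2 : (0:ℝ) ≤ ∑ i, ∑ j, ‖A i j‖ ^ 2 :=
    Finset.sum_nonneg fun i _ => Finset.sum_nonneg fun j _ => sq_nonneg _
  rw [hsnorm, trace_conj_mul_aux, h1, ← Real.sqrt_div h2]
  congr 1
  have : ((∑ i, ∑ j, ‖A i j‖ ^ 2 : ℝ) : ℂ) / (d : ℂ)
      = (((∑ i, ∑ j, ‖A i j‖ ^ 2 : ℝ) / d : ℝ) : ℂ) := by push_cast; ring
  rw [this, Complex.ofReal_re]

lemma hsnorm_nonneg (A : Matrix (Fin d) (Fin d) ℂ) : 0 ≤ hsnorm A :=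
  Real.sqrt_nonneg _

lemma hsnorm_sub_le (A B : Matrix (Fin d) (Fin d) ℂ) :
    hsnorm (A - B) ≤ hsnorm A + hsnorm B := by
  simp only [hsnorm_eq_aux, div_eq_mul_inv, ← add_mul]
  exact mul_le_mul_of_nonneg_right (norm_sub_le A B)
    (inv_nonneg.2 (Real.sqrt_nonneg _))

lemma hsnorm_sub_comm (A B : Matrix (Fin d) (Fin d) ℂ) :
    hsnorm (A - B) = hsnorm (B - A) := by
  simp only [hsnorm_eq_aux]
  rw [← norm_neg (A - B), neg_sub]

lemma hsnorm_coe_unitary_le (U : Matrix.unitaryGroup (Fin d) ℂ) :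
    hsnorm (U : Matrix (Fin d) (Fin d) ℂ) ≤ 1 := by
  rw [hsnorm]
  have h : ((U : Matrix (Fin d) (Fin d) ℂ))ᴴ * (U : Matrix (Fin d) (Fin d) ℂ) = 1 := by
    rw [← Matrix.star_eq_conjTranspose]
    exact Unitary.coe_star_mul_self U
  rw [h]
  have htr : Matrix.trace (1 : Matrix (Fin d) (Fin d) ℂ) = (d : ℂ) := by
    simp [Matrix.trace_one]
  rw [htr]
  rcases Nat.eq_zero_or_pos d with hd | hd
  · subst hd; simp
  · rw [div_self (by exact_mod_cast hd.ne' : (d : ℂ) ≠ 0)]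
    simp

lemma hsnorm_mul_coe_unitary (A : Matrix (Fin d) (Fin d) ℂ)
    (U : Matrix.unitaryGroup (Fin d) ℂ) :
    hsnorm (A * (U : Matrix (Fin d) (Fin d) ℂ)) = hsnorm A := by
  have hU : (U : Matrix (Fin d) (Fin d) ℂ) * ((U : Matrix (Fin d) (Fin d) ℂ))ᴴ = 1 := by
    rw [← Matrix.star_eq_conjTranspose]
    exact Unitary.coe_mul_star_self U
  have htr :
      Matrix.trace ((A * (U : Matrix (Fin d) (Fin d) ℂ))ᴴ * (A * (U : Matrix (Fin d) (Fin d) ℂ)))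
      = Matrix.trace (Aᴴ * A) := by
    rw [Matrix.conjTranspose_mul]
    calc Matrix.trace (((U : Matrix (Fin d) (Fin d) ℂ))ᴴ * Aᴴ * (A * (U : Matrix (Fin d) (Fin d) ℂ)))
        = Matrix.trace ((((U : Matrix (Fin d) (Fin d) ℂ))ᴴ * (Aᴴ * A)) * (U : Matrix (Fin d) (Fin d) ℂ)) := by
          rw [mul_assoc, mul_assoc, mul_assoc]
      _ = Matrix.trace ((U : Matrix (Fin d) (Fin d) ℂ) * (((U : Matrix (Fin d) (Fin d) ℂ))ᴴ * (Aᴴ * A))) := by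
          rw [Matrix.trace_mul_comm]
      _ = Matrix.trace (Aᴴ * A) := by
          rw [← mul_assoc, hU, one_mul]
  rw [hsnorm, hsnorm, htr]

lemma hsnorm_unitary_key (u v w : Matrix.unitaryGroup (Fin d) ℂ) :
    hsnorm ((u : Matrix (Fin d) (Fin d) ℂ) * (v : Matrix (Fin d) (Fin d) ℂ)
      - (w : Matrix (Fin d) (Fin d) ℂ))
    = hsnorm (((u * v * w⁻¹ : Matrix.unitaryGroup (Fin d) ℂ) : Matrix (Fin d) (Fin d) ℂ) - 1) := by
  have h2 : ((w⁻¹ : Matrix.unitaryGroup (Fin d) ℂ) : Matrix (Fin d) (Fin d) ℂ)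
      * (w : Matrix (Fin d) (Fin d) ℂ) = 1 := by
    have : ((w⁻¹ * w : Matrix.unitaryGroup (Fin d) ℂ) : Matrix (Fin d) (Fin d) ℂ)
        = ((1 : Matrix.unitaryGroup (Fin d) ℂ) : Matrix (Fin d) (Fin d) ℂ) := by
      rw [inv_mul_cancel]
    rw [MulMemClass.coe_mul] at this
    simp only [OneMemClass.coe_one] at this
    exact this
  have hc : ((u * v * w⁻¹ : Matrix.unitaryGroup (Fin d) ℂ) : Matrix (Fin d) (Fin d) ℂ)
      = (u : Matrix (Fin d) (Fin d) ℂ) * (v : Matrix (Fin d) (Fin d) ℂ)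
        * ((w⁻¹ : Matrix.unitaryGroup (Fin d) ℂ) : Matrix (Fin d) (Fin d) ℂ) := rfl
  rw [← hsnorm_mul_coe_unitary
      (((u * v * w⁻¹ : Matrix.unitaryGroup (Fin d) ℂ) : Matrix (Fin d) (Fin d) ℂ) - 1) w,
    sub_mul, one_mul, hc, mul_assoc, mul_assoc, h2, mul_one]

lemma hsnorm_unitary_key' (u w : Matrix.unitaryGroup (Fin d) ℂ) :
    hsnorm ((u : Matrix (Fin d) (Fin d) ℂ) - (w : Matrix (Fin d) (Fin d) ℂ))
    = hsnorm (((u * w⁻¹ : Matrix.unitaryGroup (Fin d) ℂ) : Matrix (Fin d) (Fin d) ℂ) - 1) := by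
  have h := hsnorm_unitary_key u 1 w
  simpa using h

lemma hsnorm_coe_unitary_sub_one_le (U : Matrix.unitaryGroup (Fin d) ℂ) :
    hsnorm ((U : Matrix (Fin d) (Fin d) ℂ) - 1) ≤ 2 := by
  have h1 : hsnorm ((1 : Matrix (Fin d) (Fin d) ℂ)) ≤ 1 := by
    simpa using hsnorm_coe_unitary_le (1 : Matrix.unitaryGroup (Fin d) ℂ)
  have := hsnorm_sub_le (U : Matrix (Fin d) (Fin d) ℂ) 1
  have h2 := hsnorm_coe_unitary_le U
  linarith

end hsnormAux

/-- Lemma: generators-and-relations consequence of weak ucp-stability. -/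
theorem weakly_ucp_stable_gen_rel
    {S : Type} [Fintype S] {Γ : Type} [Group Γ]
    (π : FreeGroup S →* Γ) (hπ : Function.Surjective π)
    (hstab : WeaklyUcpStable Γ) :
    ∀ ε > (0 : ℝ), ∃ δ > (0 : ℝ), ∃ R₀ W₀ : Finset (FreeGroup S),
      (∀ r ∈ R₀, π r = 1) ∧ (∀ w ∈ W₀, π w ≠ 1) ∧
      ∀ (d : ℕ) (f : S → Matrix.unitaryGroup (Fin d) ℂ),
        (∀ r ∈ R₀, hsnorm ((FreeGroup.lift f r : Matrix (Fin d) (Fin d) ℂ) - 1) < δ) →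
        (∀ w ∈ W₀, hsnorm ((FreeGroup.lift f w : Matrix (Fin d) (Fin d) ℂ) - 1) > Real.sqrt 2 - δ) →
        ∃ (E : HilbertExt d) (ρ : Γ →* (E.carrier →L[ℂ] E.carrier)),
          (∀ g : Γ, ρ g ∈ unitary (E.carrier →L[ℂ] E.carrier)) ∧
          ∀ s : S, hsnorm ((f s : Matrix (Fin d) (Fin d) ℂ)
            - compress E (ρ (π (FreeGroup.of s)))) < ε := by
  classical
  intro ε hε
  by_contra hcon
  push_neg at hcon
  -- enumeration of the free group
  haveI : Countable (FreeGroup S) :=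
    Function.Injective.countable (FreeGroup.toWord_injective (α := S))
  obtain ⟨e, he⟩ := exists_surjective_nat (FreeGroup S)
  -- exhausting finite sets of relations / non-relations
  set R : ℕ → Finset (FreeGroup S) :=
    fun n => ((Finset.range n).image e).filter (fun x => π x = 1) with hRdef
  set W : ℕ → Finset (FreeGroup S) :=
    fun n => ((Finset.range n).image e).filter (fun x => π x ≠ 1) with hWdef
  have hR : ∀ n, ∀ r ∈ R n, π r = 1 := fun n r hr => (Finset.mem_filter.1 hr).2
  have hW : ∀ n, ∀ w ∈ W n, π w ≠ 1 := fun n w hw => (Finset.mem_filter.1 hw).2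
  have hRmem : ∀ x : FreeGroup S, π x = 1 → ∀ᶠ n in Filter.atTop, x ∈ R n := by
    intro x hx
    obtain ⟨k, rfl⟩ := he x
    refine Filter.eventually_atTop.2 ⟨k + 1, fun n hn => ?_⟩
    exact Finset.mem_filter.2 ⟨Finset.mem_image.2 ⟨k, Finset.mem_range.2 hn, rfl⟩, hx⟩
  have hWmem : ∀ x : FreeGroup S, π x ≠ 1 → ∀ᶠ n in Filter.atTop, x ∈ W n := by
    intro x hx
    obtain ⟨k, rfl⟩ := he x
    refine Filter.eventually_atTop.2 ⟨k + 1, fun n hn => ?_⟩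
    exact Finset.mem_filter.2 ⟨Finset.mem_image.2 ⟨k, Finset.mem_range.2 hn, rfl⟩, hx⟩
  -- extract counterexamples
  have hcex := fun n : ℕ =>
    hcon (1 / ((n : ℝ) + 1)) (by positivity) (R n) (W n) (hR n) (hW n)
  choose dd f h1 h2 h3 using hcex
  -- section of π
  choose σ hσ using hπ
  -- the approximate representations
  set φ : ∀ n : ℕ, Γ → Matrix.unitaryGroup (Fin (dd n)) ℂ :=
    fun n g => FreeGroup.lift (f n) (σ g) with hφdef
  have hone : Filter.Tendsto (fun n : ℕ => 1 / ((n : ℝ) + 1)) Filter.atTop (nhds 0) :=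
    tendsto_one_div_add_atTop_nhds_zero_nat
  -- approximate multiplicativity
  have hA : ∀ g h : Γ, Filter.Tendsto
      (fun n => hsnorm ((φ n g : Matrix (Fin (dd n)) (Fin (dd n)) ℂ)
        * (φ n h : Matrix (Fin (dd n)) (Fin (dd n)) ℂ)
        - (φ n (g * h) : Matrix (Fin (dd n)) (Fin (dd n)) ℂ)))
      Filter.atTop (nhds 0) := by
    intro g h
    set x : FreeGroup S := σ g * σ h * (σ (g * h))⁻¹ with hxdef
    have hx : π x = 1 := by
      simp only [hxdef, map_mul, map_inv, hσ]
      exact mul_inv_cancel _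
    refine squeeze_zero' (Filter.Eventually.of_forall fun n => hsnorm_nonneg _) ?_ hone
    filter_upwards [hRmem x hx] with n hn
    have hk := h1 n x hn
    have hxeq : φ n g * φ n h * (φ n (g * h))⁻¹ = FreeGroup.lift (f n) x := by
      simp [hφdef, hxdef, map_mul, map_inv]
    rw [hsnorm_unitary_key (φ n g) (φ n h) (φ n (g * h)), hxeq]
    exact le_of_lt hk
  -- liminf lower bound
  have hB : ∀ g : Γ, g ≠ 1 → Real.sqrt 2 ≤ Filter.liminf
      (fun n => hsnorm ((φ n g : Matrix (Fin (dd n)) (Fin (dd n)) ℂ) - 1)) Filter.atTop := by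
    intro g hg
    have hx : π (σ g) ≠ 1 := by rw [hσ]; exact hg
    have hev : ∀ᶠ (n : ℕ) in Filter.atTop, Real.sqrt 2 - 1 / ((n : ℝ) + 1)
        ≤ hsnorm ((φ n g : Matrix (Fin (dd n)) (Fin (dd n)) ℂ) - 1) := by
      filter_upwards [hWmem (σ g) hx] with n hn
      exact le_of_lt (h2 n (σ g) hn)
    by_contra hlt
    push_neg at hlt
    obtain ⟨b, hb1, hb2⟩ := exists_between hlt
    have hbev : ∀ᶠ (n : ℕ) in Filter.atTop, b
        ≤ hsnorm ((φ n g : Matrix (Fin (dd n)) (Fin (dd n)) ℂ) - 1) := by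
      have h0 : ∀ᶠ (n : ℕ) in Filter.atTop, 1 / ((n : ℝ) + 1) < Real.sqrt 2 - b :=
        hone.eventually_lt_const (by linarith)
      filter_upwards [hev, h0] with n ha hb
      linarith
    have hcb : Filter.IsCoboundedUnder (· ≥ ·) Filter.atTop
        (fun n => hsnorm ((φ n g : Matrix (Fin (dd n)) (Fin (dd n)) ℂ) - 1)) :=
      Filter.isCoboundedUnder_ge_of_eventually_le Filter.atTop
        (Filter.Eventually.of_forall fun n => hsnorm_coe_unitary_sub_one_le _)
    have := Filter.le_liminf_of_le hcb hbev
    linarith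
  -- apply stability
  obtain ⟨E, ρ, hunit, hconv⟩ := hstab dd φ hA hB
  -- the generators are eventually well approximated
  have hall : ∀ᶠ n in Filter.atTop, ∀ s : S,
      hsnorm ((f n s : Matrix (Fin (dd n)) (Fin (dd n)) ℂ)
        - compress (E n) (ρ n (π (FreeGroup.of s)))) < ε := by
    rw [Filter.eventually_all]
    intro s
    set x : FreeGroup S := FreeGroup.of s * (σ (π (FreeGroup.of s)))⁻¹ with hxdef
    have hx : π x = 1 := by
      simp only [hxdef, map_mul, map_inv, hσ]
      exact mul_inv_cancel _
    have h0 : ∀ᶠ (n : ℕ) in Filter.atTop, 1 / ((n : ℝ) + 1) < ε / 2 :=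
      hone.eventually_lt_const (half_pos hε)
    have h4 : ∀ᶠ n in Filter.atTop,
        hsnorm ((φ n (π (FreeGroup.of s)) : Matrix (Fin (dd n)) (Fin (dd n)) ℂ)
          - compress (E n) (ρ n (π (FreeGroup.of s)))) < ε / 2 :=
      (hconv (π (FreeGroup.of s))).eventually_lt_const (half_pos hε)
    filter_upwards [hRmem x hx, h0, h4] with n hn hlt hcomp
    have hgen : hsnorm ((f n s : Matrix (Fin (dd n)) (Fin (dd n)) ℂ)
        - (φ n (π (FreeGroup.of s)) : Matrix (Fin (dd n)) (Fin (dd n)) ℂ)) < ε / 2 := by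
      have hco : (f n s : Matrix (Fin (dd n)) (Fin (dd n)) ℂ)
          = (FreeGroup.lift (f n) (FreeGroup.of s) : Matrix (Fin (dd n)) (Fin (dd n)) ℂ) := by
        rw [FreeGroup.lift_apply_of]
      have hxeq : FreeGroup.lift (f n) (FreeGroup.of s) * (φ n (π (FreeGroup.of s)))⁻¹
          = FreeGroup.lift (f n) x := by
        simp [hφdef, hxdef, map_mul, map_inv]
      rw [hco, hsnorm_unitary_key' (FreeGroup.lift (f n) (FreeGroup.of s))
        (φ n (π (FreeGroup.of s))), hxeq]
      exact lt_trans (h1 n x hn) hlt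
    calc hsnorm ((f n s : Matrix (Fin (dd n)) (Fin (dd n)) ℂ)
          - compress (E n) (ρ n (π (FreeGroup.of s))))
        ≤ hsnorm ((f n s : Matrix (Fin (dd n)) (Fin (dd n)) ℂ)
            - (φ n (π (FreeGroup.of s)) : Matrix (Fin (dd n)) (Fin (dd n)) ℂ))
          + hsnorm ((φ n (π (FreeGroup.of s)) : Matrix (Fin (dd n)) (Fin (dd n)) ℂ)
            - compress (E n) (ρ n (π (FreeGroup.of s)))) := by
          have h5 := hsnorm_sub_le
            ((f n s : Matrix (Fin (dd n)) (Fin (dd n)) ℂ)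
              - (φ n (π (FreeGroup.of s)) : Matrix (Fin (dd n)) (Fin (dd n)) ℂ))
            ((compress (E n) (ρ n (π (FreeGroup.of s))))
              - (φ n (π (FreeGroup.of s)) : Matrix (Fin (dd n)) (Fin (dd n)) ℂ))
          rw [show ((f n s : Matrix (Fin (dd n)) (Fin (dd n)) ℂ)
              - (φ n (π (FreeGroup.of s)) : Matrix (Fin (dd n)) (Fin (dd n)) ℂ))
              - ((compress (E n) (ρ n (π (FreeGroup.of s))))
                - (φ n (π (FreeGroup.of s)) : Matrix (Fin (dd n)) (Fin (dd n)) ℂ))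
              = (f n s : Matrix (Fin (dd n)) (Fin (dd n)) ℂ)
                - compress (E n) (ρ n (π (FreeGroup.of s))) by abel] at h5
          rwa [hsnorm_sub_comm (compress (E n) (ρ n (π (FreeGroup.of s))))] at h5
      _ < ε / 2 + ε / 2 := add_lt_add hgen hcomp
      _ = ε := by ring
  obtain ⟨n, hn⟩ := hall.exists
  obtain ⟨s, hs⟩ := h3 n (E n) (ρ n) (hunit n)
  exact absurd (hn s) (not_lt.2 hs)
end
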